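/- arXiv:cond-mat/0606810 — 3 statements merged into one kernel-verified Lean document; each statement's English description precedes it below -/
import Mathlib

section
/- Let A be a symmetric 3×3 real matrix, n a unit vector, λ ∈ ℝ with A − λI invertible and nᵀ(A − λI)⁻¹n = 0. Set m = (A − λI)⁻¹n / ‖(A − λI)⁻¹n‖ (assuming (A − λI)⁻¹n ≠ 0). Then m is a unit vector orthogonal to n, and m is a critical point of x ↦ xᵀAx restricted to unit vectors orthogonal to n; in particular (A − λI)m is parallel to n. -/
open Matrix

/-- If A − λI is invertible, v = (A − λI)⁻¹n ≠ 0 and nᵀ(A−λI)⁻¹n = 0, then the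
normalization m of v is a unit vector orthogonal to n, and (A − λI)m is parallel
to n (so m is a critical point of x ↦ xᵀAx on unit vectors orthogonal to n). -/
theorem normalized_inverse_direction_properties
    (A : Matrix (Fin 3) (Fin 3) ℝ) (hA : Aᵀ = A)
    (n : Fin 3 → ℝ) (hn : n ⬝ᵥ n = 1)
    (lam : ℝ) (hinv : IsUnit (A - lam • (1 : Matrix (Fin 3) (Fin 3) ℝ)))
    (v : Fin 3 → ℝ)
    (hv : v = (A - lam • (1 : Matrix (Fin 3) (Fin 3) ℝ))⁻¹.mulVec n)
    (hv0 : v ≠ 0)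
    (horth : n ⬝ᵥ v = 0)
    (m : Fin 3 → ℝ) (hm : m = (Real.sqrt (v ⬝ᵥ v))⁻¹ • v) :
    m ⬝ᵥ m = 1 ∧ m ⬝ᵥ n = 0 ∧
      ∃ c : ℝ, (A - lam • (1 : Matrix (Fin 3) (Fin 3) ℝ)).mulVec m = c • n := by
  have hnn : 0 ≤ v ⬝ᵥ v := Finset.sum_nonneg fun i _ => mul_self_nonneg _
  have hvv : 0 < v ⬝ᵥ v := lt_of_le_of_ne hnn
    (fun h => hv0 ((dotProduct_self_eq_zero).mp h.symm))
  have hs : Real.sqrt (v ⬝ᵥ v) ≠ 0 := ne_of_gt (Real.sqrt_pos.mpr hvv)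
  refine ⟨?_, ?_, ?_⟩
  · rw [hm, smul_dotProduct, dotProduct_smul, smul_eq_mul, smul_eq_mul]
    rw [← mul_assoc, ← mul_inv, Real.mul_self_sqrt hvv.le, inv_mul_cancel₀ hvv.ne']
  · rw [hm, smul_dotProduct, smul_eq_mul, dotProduct_comm v n, horth, mul_zero]
  · refine ⟨(Real.sqrt (v ⬝ᵥ v))⁻¹, ?_⟩
    rw [hm, mulVec_smul, hv, mulVec_mulVec, Matrix.mul_nonsing_inv _
      ((Matrix.isUnit_iff_isUnit_det _).mp hinv), one_mulVec]
end

section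
/- Let c = (S₂₂ − S₁₁)/(S₁₁ + S₂₂ − 2S₀) and δ = (S₂₃ − S₁₃)/(S₁₁ + S₂₂ − 2S₀) be real numbers, and suppose ν ≠ 0 satisfies the stationary-value quadratic derived by eliminating cos 2θ. If cos 2θ = c + δ/ν with θ ∈ (0, π/2) and sin 2θ ≠ 0, then the quantities E = 1/s₁₁(θ) and E* = (S₁₁ + S₂₂ − 2S₀)/(S₁₁S₂₂ − S₀²) and ν_a = −E*·s₁₃(θ*) satisfy E*/E + ν_a/ν = 2, where s₁₁(θ) and s₁₃(θ) are given by the rotation formulas s₁₁(θ) = (S₁₁S₂₂−S₀²)/(S₁₁+S₂₂−2S₀) + ¼(S₁₁+S₂₂−2S₀)(c − cos 2θ)², s₁₃(θ) = ½(S₁₃+S₂₃) − ½(S₂₃−S₁₃)cos 2θ, and ν = −s₁₃(θ)/s₁₁(θ). -/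
/-!
Put `x = cos 2θ`, `T = S₁₁ + S₂₂ − 2S₀` and `q = T (x − c)² / 4`, so that `s₁₁(θ) = 1/E* + q`.
Since `s₁₃` is affine in `x` with slope `−T δ / 2` and takes the value `−ν_a/E*` at `x = c`, the
stationarity condition `ν (x − c) = δ` gives `s₁₃(θ) = −ν_a/E* − 2νq`. Inserting both into
`ν s₁₁ = −s₁₃` yields `ν_a/ν = 1 − E* q`, while `E*/E = E* s₁₁ = 1 + E* q`.
-/

theorem mul_add_neg_mul_div_eq_two {Estar q ν s11 s13 s13c : ℝ}
    (hE : Estar ≠ 0) (hν : ν ≠ 0)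
    (hs11 : s11 = 1 / Estar + q) (hs13 : s13 = s13c - 2 * ν * q)
    (hνdef : ν = -s13 / s11) :
    Estar * s11 + -(Estar * s13c) / ν = 2 := by
  have hs11_ne : s11 ≠ 0 := fun h => hν (by rw [hνdef, h, div_zero])
  have hνs11 : ν * s11 = -s13 := by rw [hνdef, div_mul_cancel₀ _ hs11_ne]
  have hs13c : -(Estar * s13c) = ν * (1 - Estar * q) := by
    rw [hs11, hs13] at hνs11
    field_simp at hνs11
    linear_combination -hνs11
  rw [hs13c, mul_div_cancel_left₀ _ hν, hs11, mul_add, mul_one_div_cancel hE]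
  ring

theorem neg_mul_s13_at_θstar_eq {S0 S11 S22 S13 S23 : ℝ}
    (htr : S11 + S22 - 2 * S0 ≠ 0) :
    -((S11 + S22 - 2 * S0) * ((1 / 2) * (S13 + S23) -
      (1 / 2) * (S23 - S13) * ((S22 - S11) / (S11 + S22 - 2 * S0)))) =
      (S0 - S22) * S13 + (S0 - S11) * S23 := by
  field_simp
  ring

theorem out_of_plane_stationary_relation_general
    (S11 S22 S13 S23 : ℝ) (θ ν : ℝ)
    (S0 : ℝ)
    (hdet : S11 * S22 - S0 ^ 2 > 0)
    (htr : S11 + S22 - 2 * S0 ≠ 0)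
    (hν0 : ν ≠ 0)
    (c : ℝ) (hc : c = (S22 - S11) / (S11 + S22 - 2 * S0))
    (δ : ℝ) (hδ : δ = (S23 - S13) / (S11 + S22 - 2 * S0))
    (s11θ : ℝ)
    (hs11 : s11θ = (S11 * S22 - S0 ^ 2) / (S11 + S22 - 2 * S0) +
      (1 / 4) * (S11 + S22 - 2 * S0) * (c - Real.cos (2 * θ)) ^ 2)
    (s13θ : ℝ)
    (hs13 : s13θ = (1 / 2) * (S13 + S23) - (1 / 2) * (S23 - S13) * Real.cos (2 * θ))
    (hνdef : ν = -s13θ / s11θ)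
    (hstat : Real.cos (2 * θ) = c + δ / ν) :
    let Estar := (S11 + S22 - 2 * S0) / (S11 * S22 - S0 ^ 2)
    let E := 1 / s11θ
    let νa := ((S0 - S22) * S13 + (S0 - S11) * S23) / (S11 * S22 - S0 ^ 2)
    Estar / E + νa / ν = 2 := by
  intro Estar E νa
  set T := S11 + S22 - 2 * S0
  set x := Real.cos (2 * θ)
  have hstat' : (x - c) * ν = δ := by rw [hstat]; field_simp; ring
  have hs11' : s11θ = 1 / Estar + T * (x - c) ^ 2 / 4 := by rw [hs11, one_div_div]; ring
  have hs13' : s13θ = ((1 / 2) * (S13 + S23) - (1 / 2) * (S23 - S13) * c) -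
      2 * ν * (T * (x - c) ^ 2 / 4) := by
    have hslope : S23 - S13 = T * ((x - c) * ν) := by rw [hstat', hδ, mul_div_cancel₀ _ htr]
    rw [hs13, hslope]; ring
  have hνa : νa = -(Estar * ((1 / 2) * (S13 + S23) - (1 / 2) * (S23 - S13) * c)) := by
    rw [div_mul_eq_mul_div, ← neg_div, hc, neg_mul_s13_at_θstar_eq htr]
  simp only [E, div_div_eq_mul_div, div_one, hνa]
  exact mul_add_neg_mul_div_eq_two (div_ne_zero htr hdet.ne') hν0 hs11' hs13' hνdef

/-- At a stationary value of the out-of-plane Poisson's ratio in a plane of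
orthotropic symmetry, E*/E + ν_a/ν = 2. -/
theorem out_of_plane_stationary_relation
    (S11 S22 S12 S13 S23 S66 : ℝ) (θ ν : ℝ)
    (S0 : ℝ) (hS0 : S0 = S12 + 2 * S66)
    (hdet : S11 * S22 - S0 ^ 2 > 0)
    (htr : S11 + S22 - 2 * S0 ≠ 0)
    (hθ : θ ∈ Set.Ioo 0 (Real.pi / 2))
    (hsin : Real.sin (2 * θ) ≠ 0)
    (hν0 : ν ≠ 0)
    (c : ℝ) (hc : c = (S22 - S11) / (S11 + S22 - 2 * S0))
    (δ : ℝ) (hδ : δ = (S23 - S13) / (S11 + S22 - 2 * S0))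
    (s11θ : ℝ)
    (hs11 : s11θ = (S11 * S22 - S0 ^ 2) / (S11 + S22 - 2 * S0) +
      (1 / 4) * (S11 + S22 - 2 * S0) * (c - Real.cos (2 * θ)) ^ 2)
    (s13θ : ℝ)
    (hs13 : s13θ = (1 / 2) * (S13 + S23) - (1 / 2) * (S23 - S13) * Real.cos (2 * θ))
    (hνdef : ν = -s13θ / s11θ)
    (hstat : Real.cos (2 * θ) = c + δ / ν) :
    let Estar := (S11 + S22 - 2 * S0) / (S11 * S22 - S0 ^ 2)
    let E := 1 / s11θ
    let νa := ((S0 - S22) * S13 + (S0 - S11) * S23) / (S11 * S22 - S0 ^ 2)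
    Estar / E + νa / ν = 2 :=
  out_of_plane_stationary_relation_general S11 S22 S13 S23 θ ν S0 hdet htr hν0 c hc δ hδ s11θ hs11
    s13θ hs13 hνdef hstat
end

section
/- For a cubic material with compliances given by S₆₆ = 1/(4μ₁), S₁₂ = S₂₃ = 1/(9κ) − 1/(6μ₂), S₁₃ = S₁₂ + χ/4, S₀ = S₁₂ + 2S₆₆, S₁₁ = S₀ + χ/4, S₂₂ = S₀ + χ/2, where χ = 1/μ₂ − 1/μ₁ and κ, μ₁, μ₂ > 0, the quantity ν_a = ((S₀ − S₂₂)S₁₃ + (S₀ − S₁₁)S₂₃)/(S₁₁S₂₂ − S₀²) equals (3κ − 2μ₁)/(6κ + 2μ₁), and ρ_a = (S₂₃ − S₁₃)²/(S₁₁S₂₂ − S₀²) equals (1/6)(ν_a + 1)(μ₁/μ₂ − 1), provided S₁₁S₂₂ − S₀² ≠ 0. -/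
/-- For a cubic material, ν_a = (3κ − 2μ₁)/(6κ + 2μ₁) and
ρ_a = (1/6)(ν_a + 1)(μ₁/μ₂ − 1). -/
theorem cubic_nu_a_rho_a (κ μ1 μ2 : ℝ) (hκ : 0 < κ) (hμ1 : 0 < μ1) (hμ2 : 0 < μ2)
    (χ S66 S12 S23 S13 S0 S11 S22 : ℝ)
    (hχ : χ = 1 / μ2 - 1 / μ1)
    (hS66 : S66 = 1 / (4 * μ1))
    (hS12 : S12 = 1 / (9 * κ) - 1 / (6 * μ2))
    (hS23 : S23 = S12)
    (hS13 : S13 = S12 + χ / 4)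
    (hS0 : S0 = S12 + 2 * S66)
    (hS11 : S11 = S0 + χ / 4)
    (hS22 : S22 = S0 + χ / 2)
    (hdet : S11 * S22 - S0 ^ 2 ≠ 0) :
    ((S0 - S22) * S13 + (S0 - S11) * S23) / (S11 * S22 - S0 ^ 2)
        = (3 * κ - 2 * μ1) / (6 * κ + 2 * μ1) ∧
      (S23 - S13) ^ 2 / (S11 * S22 - S0 ^ 2)
        = (1 / 6) * ((3 * κ - 2 * μ1) / (6 * κ + 2 * μ1) + 1) * (μ1 / μ2 - 1) := by
  have hκ' := hκ.ne'
  have h1 := hμ1.ne'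
  have h2 := hμ2.ne'
  have hden : 6 * κ + 2 * μ1 ≠ 0 := by positivity
  subst hχ hS66 hS12 hS23 hS13 hS0 hS11 hS22
  constructor
  · rw [div_eq_div_iff hdet hden]
    field_simp
    ring
  · rw [div_eq_iff hdet]
    field_simp
    ring
end
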